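/- Let d ≥ 1 and for s > 0 let P_{1,s} be the differential operator on complex-valued smooth functions of (x, y, t) ∈ ℝ^d × ℝ^d × ℝ given by P_{1,s} u := -∑_{j=1}^d (∂²u/∂x_j² + s²·(∂/∂y_j + x_j·∂/∂t)² u) - s^{-2d}·∂²u/∂t² - ((2d-1)/16)·s^{2d+2}·u. Then there exist a constant c(d) > 0 and s₀ > 0, depending only on d, such that for every s ≥ s₀ there are at least ⌈c(d)·s^{2d+1}⌉ linearly independent smooth functions u : ℝ^d × ℝ^d × ℝ → ℂ, each invariant under the Heisenberg lattice action (u(x+a, y+b, t+c'+a·y) = u(x,y,t) for all a, b ∈ ℤ^d, c' ∈ ℤ), each satisfying P_{1,s} u = λ·u for some real λ < 0. -/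

import Mathlib

open Complex Real

/-- The underlying space `ℝ^d × ℝ^d × ℝ` of the Heisenberg group `ℍ_d`. -/
abbrev Heis (d : ℕ) := (Fin d → ℝ) × (Fin d → ℝ) × ℝ

/-- The left-invariant vector field `X_j = ∂/∂x_j`. -/
noncomputable def Xop (d : ℕ) (j : Fin d) (u : Heis d → ℂ) : Heis d → ℂ :=
  fun p => fderiv ℝ u p (Pi.single j 1, 0, 0)

/-- The left-invariant vector field `T = ∂/∂t`. -/
noncomputable def Tder (d : ℕ) (u : Heis d → ℂ) : Heis d → ℂ :=
  fun p => fderiv ℝ u p (0, 0, 1)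

/-- The left-invariant vector field `Y_j = ∂/∂y_j + x_j ∂/∂t`. -/
noncomputable def Yop (d : ℕ) (j : Fin d) (u : Heis d → ℂ) : Heis d → ℂ :=
  fun p => fderiv ℝ u p (0, Pi.single j 1, 0) + (p.1 j : ℂ) * fderiv ℝ u p (0, 0, 1)

/-- The Yamabe operator `P_{1,g_s} = -∑_j (X_j² + s² Y_j²) - s^{-2d} T²
- ((2d-1)/16) s^{2d+2}` of the metric `g_s` on the Heisenberg group. -/
noncomputable def yamabeOp (d : ℕ) (s : ℝ) (u : Heis d → ℂ) : Heis d → ℂ :=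
  fun p => -(∑ j, (Xop d j (Xop d j u) p + (s : ℂ) ^ 2 * Yop d j (Yop d j u) p))
    - (s : ℂ) ^ (-(2 * (d : ℤ))) * Tder d (Tder d u) p
    - ((2 * (d : ℂ) - 1) / 16) * (s : ℂ) ^ (2 * d + 2) * u p

/-- Invariance under the left action of the integer lattice of the Heisenberg
group: `u(x+a, y+b, t+c'+a·y) = u(x,y,t)`, so that `u` descends to `Γ\ℍ_d`. -/
def LatticeInvariant (d : ℕ) (u : Heis d → ℂ) : Prop :=
  ∀ (a b : Fin d → ℤ) (c' : ℤ) (x y : Fin d → ℝ) (t : ℝ),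
    u (fun j => x j + (a j : ℝ), fun j => y j + (b j : ℝ),
        t + (c' : ℝ) + ∑ j, (a j : ℝ) * y j)
      = u (x, y, t)

noncomputable def lmap (d : ℕ) (j0 : Fin d) (k l : ℤ) : Heis d →L[ℝ] ℂ :=
  ((k : ℂ) * (2 * (π : ℂ) * I)) • (Complex.ofRealCLM.comp
      ((ContinuousLinearMap.proj j0).comp (ContinuousLinearMap.fst ℝ (Fin d → ℝ) ((Fin d → ℝ) × ℝ))))
  + ((l : ℂ) * (2 * (π : ℂ) * I)) • (Complex.ofRealCLM.comp
      ((ContinuousLinearMap.proj j0).comp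
        ((ContinuousLinearMap.fst ℝ (Fin d → ℝ) ℝ).comp
          (ContinuousLinearMap.snd ℝ (Fin d → ℝ) ((Fin d → ℝ) × ℝ)))))

lemma lmap_apply (d : ℕ) (j0 : Fin d) (k l : ℤ) (v : Heis d) :
    lmap d j0 k l v = (k : ℂ) * (2 * (π : ℂ) * I) * (v.1 j0 : ℂ)
      + (l : ℂ) * (2 * (π : ℂ) * I) * (v.2.1 j0 : ℂ) := by
  simp [lmap, mul_comm]

noncomputable def uE (d : ℕ) (j0 : Fin d) (k l : ℤ) : Heis d → ℂ :=
  fun p => Complex.exp (lmap d j0 k l p)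

lemma hasFDerivAt_uE (d : ℕ) (j0 : Fin d) (k l : ℤ) (p : Heis d) :
    HasFDerivAt (uE d j0 k l) (Complex.exp (lmap d j0 k l p) • (lmap d j0 k l)) p :=
  (lmap d j0 k l).hasFDerivAt.cexp

lemma fderiv_uE (d : ℕ) (j0 : Fin d) (k l : ℤ) (p v : Heis d) :
    fderiv ℝ (uE d j0 k l) p v = lmap d j0 k l v * uE d j0 k l p := by
  rw [(hasFDerivAt_uE d j0 k l p).fderiv]; simp [uE, mul_comm]

lemma fderiv_mul_uE (d : ℕ) (j0 : Fin d) (k l : ℤ) (a : ℂ) (p v : Heis d) :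
    fderiv ℝ (fun q => a * uE d j0 k l q) p v
      = a * lmap d j0 k l v * uE d j0 k l p := by
  rw [((hasFDerivAt_uE d j0 k l p).const_mul a).fderiv]; simp [uE]; ring

lemma lmap_et (d : ℕ) (j0 : Fin d) (k l : ℤ) :
    lmap d j0 k l ((0, 0, 1) : Heis d) = 0 := by
  simp [lmap_apply]

lemma lmap_ex (d : ℕ) (j0 j : Fin d) (k l : ℤ) :
    lmap d j0 k l ((Pi.single j 1, 0, 0) : Heis d)
      = if j0 = j then (k : ℂ) * (2 * (π : ℂ) * I) else 0 := by
  simp [lmap_apply, Pi.single_apply]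
  split <;> simp

lemma lmap_ey (d : ℕ) (j0 j : Fin d) (k l : ℤ) :
    lmap d j0 k l ((0, Pi.single j 1, 0) : Heis d)
      = if j0 = j then (l : ℂ) * (2 * (π : ℂ) * I) else 0 := by
  simp [lmap_apply, Pi.single_apply]
  split <;> simp

lemma Xop_uE (d : ℕ) (j0 j : Fin d) (k l : ℤ) :
    Xop d j (uE d j0 k l)
      = fun p => lmap d j0 k l ((Pi.single j 1, 0, 0) : Heis d) * uE d j0 k l p := by
  funext p; exact fderiv_uE d j0 k l p _

lemma XX_uE (d : ℕ) (j0 j : Fin d) (k l : ℤ) (p : Heis d) :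
    Xop d j (Xop d j (uE d j0 k l)) p
      = lmap d j0 k l ((Pi.single j 1, 0, 0) : Heis d) ^ 2 * uE d j0 k l p := by
  rw [Xop_uE]; unfold Xop; rw [fderiv_mul_uE]; ring

lemma Yop_uE (d : ℕ) (j0 j : Fin d) (k l : ℤ) :
    Yop d j (uE d j0 k l)
      = fun p => lmap d j0 k l ((0, Pi.single j 1, 0) : Heis d) * uE d j0 k l p := by
  funext p; unfold Yop; rw [fderiv_uE, fderiv_uE, lmap_et]; ring

lemma YY_uE (d : ℕ) (j0 j : Fin d) (k l : ℤ) (p : Heis d) :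
    Yop d j (Yop d j (uE d j0 k l)) p
      = lmap d j0 k l ((0, Pi.single j 1, 0) : Heis d) ^ 2 * uE d j0 k l p := by
  rw [Yop_uE]; unfold Yop; rw [fderiv_mul_uE, fderiv_mul_uE, lmap_et]; ring

lemma TT_uE (d : ℕ) (j0 : Fin d) (k l : ℤ) (p : Heis d) :
    Tder d (Tder d (uE d j0 k l)) p = 0 := by
  have h : Tder d (uE d j0 k l) = fun _ => (0 : ℂ) := by
    funext q; unfold Tder; rw [fderiv_uE, lmap_et, zero_mul]
  rw [h]; unfold Tder; simp

lemma yamabe_uE (d : ℕ) (j0 : Fin d) (k l : ℤ) (s : ℝ) (p : Heis d) :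
    yamabeOp d s (uE d j0 k l) p
      = ((4 * π ^ 2 * (k : ℝ) ^ 2 + 4 * π ^ 2 * s ^ 2 * (l : ℝ) ^ 2
          - ((2 * (d : ℝ) - 1) / 16) * s ^ (2 * d + 2) : ℝ) : ℂ) * uE d j0 k l p := by
  unfold yamabeOp
  rw [TT_uE, mul_zero]
  have hsum : (∑ j, (Xop d j (Xop d j (uE d j0 k l)) p
      + (s : ℂ) ^ 2 * Yop d j (Yop d j (uE d j0 k l)) p))
      = (((k : ℂ) * (2 * (π : ℂ) * I)) ^ 2
         + (s : ℂ) ^ 2 * ((l : ℂ) * (2 * (π : ℂ) * I)) ^ 2) * uE d j0 k l p := by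
    have : ∀ j, Xop d j (Xop d j (uE d j0 k l)) p
        + (s : ℂ) ^ 2 * Yop d j (Yop d j (uE d j0 k l)) p
        = if j0 = j then (((k : ℂ) * (2 * (π : ℂ) * I)) ^ 2
            + (s : ℂ) ^ 2 * ((l : ℂ) * (2 * (π : ℂ) * I)) ^ 2) * uE d j0 k l p else 0 := by
      intro j
      rw [XX_uE, YY_uE, lmap_ex, lmap_ey]
      split
      · ring
      · simp
    rw [Finset.sum_congr rfl (fun j _ => this j), Finset.sum_ite_eq,
      if_pos (Finset.mem_univ j0)]
  rw [hsum]
  simp only [uE]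
  push_cast
  linear_combination (-(4 * (π : ℂ) ^ 2 * (k : ℂ) ^ 2) - 4 * (π : ℂ) ^ 2 * (s : ℂ) ^ 2 * (l : ℂ) ^ 2
      ) * cexp (lmap d j0 k l p) * Complex.I_sq

lemma contDiff_uE (d : ℕ) (j0 : Fin d) (k l : ℤ) : ContDiff ℝ (⊤ : ℕ∞) (uE d j0 k l) :=
  Complex.contDiff_exp.comp (lmap d j0 k l).contDiff

lemma latticeInv_uE (d : ℕ) (j0 : Fin d) (k l : ℤ) :
    LatticeInvariant d (uE d j0 k l) := by
  intro a b c' x y t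
  have h : lmap d j0 k l (fun j => x j + (a j : ℝ), fun j => y j + (b j : ℝ),
        t + (c' : ℝ) + ∑ j, (a j : ℝ) * y j)
      = lmap d j0 k l (x, y, t) + ((k * a j0 + l * b j0 : ℤ) : ℂ) * (2 * (π : ℂ) * I) := by
    simp only [lmap_apply]
    push_cast
    ring
  simp only [uE, h, Complex.exp_add, Complex.exp_int_mul_two_pi_mul_I, mul_one]

noncomputable def chi (d : ℕ) (j0 : Fin d) (k l : ℤ) : Multiplicative (Heis d) →* ℂ where
  toFun p := uE d j0 k l p.toAdd
  map_one' := by simp [uE]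
  map_mul' p q := by simp [uE, map_add, Complex.exp_add]

lemma exp_lin_inj (m m' : ℤ)
    (h : ∀ x : ℝ, Complex.exp ((m : ℂ) * (2 * (π : ℂ) * I) * x)
        = Complex.exp ((m' : ℂ) * (2 * (π : ℂ) * I) * x)) : m = m' := by
  by_contra hne
  have hD : ((m - m' : ℤ) : ℝ) ≠ 0 := by
    exact_mod_cast sub_ne_zero.mpr hne
  set x : ℝ := 1 / (2 * ((m - m' : ℤ) : ℝ)) with hx
  have h1 : Complex.exp ((m : ℂ) * (2 * (π : ℂ) * I) * x
      - (m' : ℂ) * (2 * (π : ℂ) * I) * x) = 1 := by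
    rw [Complex.exp_sub, h x, div_self (Complex.exp_ne_zero _)]
  have hDc : ((m : ℂ) - (m' : ℂ)) ≠ 0 :=
    sub_ne_zero.mpr (by exact_mod_cast hne)
  have h2 : (m : ℂ) * (2 * (π : ℂ) * I) * x - (m' : ℂ) * (2 * (π : ℂ) * I) * x
      = (π : ℂ) * I := by
    have hxc : ((m : ℂ) - (m' : ℂ)) * (x : ℂ) = 1 / 2 := by
      rw [hx]
      push_cast
      field_simp
    linear_combination (2 * (π : ℂ) * I) * hxc
  rw [h2, Complex.exp_pi_mul_I] at h1
  norm_num at h1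

lemma uE_inj (d : ℕ) (j0 : Fin d) {k l k' l' : ℤ}
    (h : ∀ p : Heis d, uE d j0 k l p = uE d j0 k' l' p) : k = k' ∧ l = l' := by
  constructor
  · apply exp_lin_inj
    intro x
    have := h (Pi.single j0 x, 0, 0)
    simpa [uE, lmap_apply, Pi.single_eq_same, mul_comm] using this
  · apply exp_lin_inj
    intro x
    have := h (0, Pi.single j0 x, 0)
    simpa [uE, lmap_apply, Pi.single_eq_same, mul_comm] using this


/-- Proposition 4.1 of the paper: there are constants `c(d) > 0` and `s₀ > 0`
such that for every `s ≥ s₀` the Yamabe operator `P_{1,g_s}` on the compact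
Heisenberg manifold `Γ\ℍ_d` has at least `⌈c(d)·s^{2d+1}⌉` negative
eigenvalues, counted with multiplicity. -/
theorem yamabe_negative_eigenvalues_heisenberg (d : ℕ) (hd : 1 ≤ d) :
    ∃ c : ℝ, 0 < c ∧ ∃ s₀ : ℝ, 0 < s₀ ∧ ∀ s : ℝ, s₀ ≤ s →
      ∃ u : Fin ⌈c * s ^ (2 * d + 1)⌉₊ → Heis d → ℂ,
        LinearIndependent ℂ u ∧
        ∀ i, ContDiff ℝ (⊤ : ℕ∞) (u i) ∧ LatticeInvariant d (u i) ∧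
          ∃ lam : ℝ, lam < 0 ∧
            ∀ p : Heis d, yamabeOp d s (u i) p = (lam : ℂ) * u i p := by
  have j0 : Fin d := ⟨0, hd⟩
  refine ⟨1 / 4096, by norm_num, 1, one_pos, fun s hs => ?_⟩
  have hs0 : (0 : ℝ) < s := lt_of_lt_of_le one_pos hs
  set B : ℕ := ⌊s ^ d / 64⌋₊ + 1 with hB
  set A : ℕ := ⌊s ^ (d + 1) / 64⌋₊ + 1 with hA
  have hBpos : 0 < B := Nat.succ_pos _
  have hNAB : ⌈(1 / 4096 : ℝ) * s ^ (2 * d + 1)⌉₊ ≤ A * B := by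
    apply Nat.ceil_le.mpr
    have h1 : s ^ (d + 1) / 64 ≤ (A : ℝ) := by
      rw [hA]; push_cast; exact le_of_lt (Nat.lt_floor_add_one _)
    have h2 : s ^ d / 64 ≤ (B : ℝ) := by
      rw [hB]; push_cast; exact le_of_lt (Nat.lt_floor_add_one _)
    have hexp : (d + 1) + d = 2 * d + 1 := by ring
    have h3 : (1 / 4096 : ℝ) * s ^ (2 * d + 1) = (s ^ (d + 1) / 64) * (s ^ d / 64) := by
      rw [div_mul_div_comm, ← pow_add, hexp]; ring
    rw [h3, Nat.cast_mul]
    exact mul_le_mul h1 h2 (by positivity) (by positivity)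
  set N : ℕ := ⌈(1 / 4096 : ℝ) * s ^ (2 * d + 1)⌉₊ with hN
  set kf : Fin N → ℕ := fun i => (i : ℕ) / B with hkf
  set lf : Fin N → ℕ := fun i => (i : ℕ) % B with hlf
  refine ⟨fun i => uE d j0 (kf i) (lf i), ?_, ?_⟩
  · -- linear independence
    have hinj : Function.Injective (fun i : Fin N => chi d j0 (kf i) (lf i)) := by
      intro i i' hchi
      have h2 : ∀ p : Heis d, uE d j0 (kf i) (lf i) p = uE d j0 (kf i') (lf i') p := by
        intro p
        exact DFunLike.congr_fun hchi (Multiplicative.ofAdd p)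
      obtain ⟨hk, hl⟩ := uE_inj d j0 h2
      have hk' : kf i = kf i' := by exact_mod_cast hk
      have hl' : lf i = lf i' := by exact_mod_cast hl
      have e1 := Nat.div_add_mod (i : ℕ) B
      have e2 := Nat.div_add_mod (i' : ℕ) B
      have hk'' : (i : ℕ) / B = (i' : ℕ) / B := hk'
      have hl'' : (i : ℕ) % B = (i' : ℕ) % B := hl'
      exact Fin.ext (by
        rw [← Nat.div_add_mod (i : ℕ) B, ← Nat.div_add_mod (i' : ℕ) B, hk'', hl''])
    have hli := (linearIndependent_monoidHom (Multiplicative (Heis d)) ℂ).comp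
      (fun i : Fin N => chi d j0 (kf i) (lf i)) hinj
    exact hli
  · intro i
    have hiAB : (i : ℕ) < A * B := lt_of_lt_of_le i.isLt hNAB
    have hkA : kf i < A := (Nat.div_lt_iff_lt_mul hBpos).mpr hiAB
    have hkr : ((kf i : ℤ) : ℝ) ≤ s ^ (d + 1) / 64 := by
      have h1 : kf i ≤ ⌊s ^ (d + 1) / 64⌋₊ := by omega
      have h2 : (⌊s ^ (d + 1) / 64⌋₊ : ℝ) ≤ s ^ (d + 1) / 64 := Nat.floor_le (by positivity)
      push_cast
      calc ((kf i : ℕ) : ℝ) ≤ (⌊s ^ (d + 1) / 64⌋₊ : ℝ) := by exact_mod_cast h1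
        _ ≤ _ := h2
    have hlr : ((lf i : ℤ) : ℝ) ≤ s ^ d / 64 := by
      have h0 : lf i < B := Nat.mod_lt _ hBpos
      have h1 : lf i ≤ ⌊s ^ d / 64⌋₊ := by omega
      have h2 : (⌊s ^ d / 64⌋₊ : ℝ) ≤ s ^ d / 64 := Nat.floor_le (by positivity)
      push_cast
      calc ((lf i : ℕ) : ℝ) ≤ (⌊s ^ d / 64⌋₊ : ℝ) := by exact_mod_cast h1
        _ ≤ _ := h2
    refine ⟨contDiff_uE d j0 _ _, latticeInv_uE d j0 _ _,
      4 * π ^ 2 * (((kf i : ℤ) : ℝ)) ^ 2 + 4 * π ^ 2 * s ^ 2 * (((lf i : ℤ) : ℝ)) ^ 2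
        - ((2 * (d : ℝ) - 1) / 16) * s ^ (2 * d + 2), ?_, fun p => yamabe_uE d j0 _ _ s p⟩
    -- negativity of the eigenvalue
    have hk0 : (0 : ℝ) ≤ ((kf i : ℤ) : ℝ) := by positivity
    have hl0 : (0 : ℝ) ≤ ((lf i : ℤ) : ℝ) := by positivity
    have hP : (s ^ (d + 1)) ^ 2 = s ^ (2 * d + 2) := by
      rw [← pow_mul]; congr 1; ring
    have hQ : s ^ 2 * (s ^ d) ^ 2 = s ^ (2 * d + 2) := by
      rw [← pow_mul, ← pow_add]; congr 1; ring
    have hk2 : (((kf i : ℤ) : ℝ)) ^ 2 ≤ s ^ (2 * d + 2) / 4096 := by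
      have := pow_le_pow_left₀ hk0 hkr 2
      calc (((kf i : ℤ) : ℝ)) ^ 2 ≤ (s ^ (d + 1) / 64) ^ 2 := this
        _ = s ^ (2 * d + 2) / 4096 := by rw [div_pow, hP]; norm_num
    have hl2 : s ^ 2 * (((lf i : ℤ) : ℝ)) ^ 2 ≤ s ^ (2 * d + 2) / 4096 := by
      have h1 : (((lf i : ℤ) : ℝ)) ^ 2 ≤ (s ^ d / 64) ^ 2 := pow_le_pow_left₀ hl0 hlr 2
      have h2 : s ^ 2 * (((lf i : ℤ) : ℝ)) ^ 2 ≤ s ^ 2 * (s ^ d / 64) ^ 2 :=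
        mul_le_mul_of_nonneg_left h1 (by positivity)
      calc s ^ 2 * (((lf i : ℤ) : ℝ)) ^ 2 ≤ s ^ 2 * (s ^ d / 64) ^ 2 := h2
        _ = s ^ (2 * d + 2) / 4096 := by rw [div_pow, ← hQ]; ring
    have hspos : (0 : ℝ) < s ^ (2 * d + 2) := by positivity
    have hpi2 : π ^ 2 < 10 := by nlinarith [Real.pi_lt_d2, Real.pi_pos]
    have hd1 : (1 : ℝ) ≤ (d : ℝ) := by exact_mod_cast hd
    have hC : (1 / 16 : ℝ) * s ^ (2 * d + 2) ≤ ((2 * (d : ℝ) - 1) / 16) * s ^ (2 * d + 2) := by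
      apply mul_le_mul_of_nonneg_right _ (le_of_lt hspos)
      linarith
    nlinarith [mul_le_mul_of_nonneg_left hk2 (by positivity : (0 : ℝ) ≤ 4 * π ^ 2),
      mul_le_mul_of_nonneg_left hl2 (by positivity : (0 : ℝ) ≤ 4 * π ^ 2),
      mul_lt_mul_of_pos_right hpi2 hspos, Real.pi_pos]
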